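/- In a minimally oriented graph G^min of a bi-directed graph G, the relation v ⪯ w defined by 'v = w, or Bd(v) ⊊ Bd(w) in G, or there is a directed path from v to w in G^min' is a partial order on the vertex set. -/

import Mathlib

/-- Possible edge types between an ordered pair of distinct vertices of a
simple mixed graph.  `arrowTo` at `(v, w)` means `v → w`, `arrowFrom` means
`v ← w`, `undir` means `v − w` and `bidir` means `v ↔ w`. -/
inductive EType : Type
  | none | undir | arrowTo | arrowFrom | bidir
deriving DecidableEq

/-- The edge type seen from the reversed ordered pair of vertices. -/
def EType.mirror : EType → EType
  | .none => .none
  | .undir => .undir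
  | .arrowTo => .arrowFrom
  | .arrowFrom => .arrowTo
  | .bidir => .bidir

/-- A simple mixed graph: at most one edge (undirected, directed or
bi-directed) between any two distinct vertices, and no self loops. -/
structure MixedGraph (V : Type) where
  E : V → V → EType
  no_loop : ∀ v, E v v = .none
  symm : ∀ v w, E w v = (E v w).mirror

/-- `(a, b, c)` are three consecutive vertices on the path `p`. -/
def ConsecTriple {V : Type} (p : List V) (a b c : V) : Prop :=
  ∃ l1 l2, p = l1 ++ a :: b :: c :: l2

namespace MixedGraph

variable {V : Type} (G : MixedGraph V)

/-- `v − w` is an edge of `G`. -/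
def Undir (v w : V) : Prop := G.E v w = .undir

/-- `v → w` is an edge of `G`. -/
def Dir (v w : V) : Prop := G.E v w = .arrowTo

/-- `v ↔ w` is an edge of `G`. -/
def Bidir (v w : V) : Prop := G.E v w = .bidir

/-- `v` and `w` are adjacent (joined by some edge). -/
def Adj (v w : V) : Prop := G.E v w ≠ .none

/-- The edge between `a` and `b` has an arrowhead at `b`. -/
def HeadAt (a b : V) : Prop := G.E a b = .arrowTo ∨ G.E a b = .bidir

/-- Closed boundary: `v` together with its adjacent vertices. -/
def Bd (v : V) : Set V := insert v {w | G.Adj v w}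

/-- A set of vertices is complete if all of its pairs of distinct
vertices are adjacent. -/
def Complete (S : Set V) : Prop := ∀ v ∈ S, ∀ w ∈ S, v ≠ w → G.Adj v w

/-- A vertex is simplicial if its closed boundary is complete. -/
def Simplicial (v : V) : Prop := G.Complete (G.Bd v)

/-- `v` is an ancestor of `w`: `v = w` or there is a directed path from
`v` to `w`. -/
def Anc (v w : V) : Prop := Relation.ReflTransGen G.Dir v w

/-- The set of ancestors of vertices in `C`. -/
def anSet (C : Set V) : Set V := {v | ∃ c ∈ C, G.Anc v c}

/-- `G` is an ancestral graph. -/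
def Ancestral : Prop :=
  (∀ v w, G.Dir v w → ¬ G.Anc w v) ∧
  (∀ v w, G.Undir v w → ∀ u, ¬ G.HeadAt u v) ∧
  (∀ v w, G.Bidir v w → ¬ G.Anc v w)

/-- The boundary containment property. -/
def BdContain : Prop :=
  (∀ v w, G.Undir v w → G.Bd v = G.Bd w) ∧
  (∀ v w, G.Dir v w → G.Bd v ⊆ G.Bd w)

/-- `b` is a collider between consecutive neighbours `a` and `c`. -/
def Collider (a b c : V) : Prop := G.HeadAt a b ∧ G.HeadAt c b

/-- A path: a list of distinct vertices, consecutive ones adjacent. -/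
def IsPath (p : List V) : Prop := p.Nodup ∧ p.Chain' G.Adj

/-- `p` is an m-connecting path given `C`: every non-collider on it is
outside `C` and every collider on it is an ancestor of `C`. -/
def IsMConnPath (C : Set V) (p : List V) : Prop :=
  G.IsPath p ∧
  ∀ a b c, ConsecTriple p a b c →
    (G.Collider a b c → b ∈ G.anSet C) ∧ (¬ G.Collider a b c → b ∉ C)

/-- `v` and `w` are m-connected given `C`. -/
def MConn (v w : V) (C : Set V) : Prop :=
  ∃ p, G.IsMConnPath C p ∧ p.head? = some v ∧ p.getLast? = some w

/-- `v` and `w` are m-separated given `C`. -/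
def MSep (v w : V) (C : Set V) : Prop := ¬ G.MConn v w C

/-- A maximal (ancestral) graph: every pair of distinct non-adjacent
vertices is m-separated given some set. -/
def Maximal : Prop :=
  ∀ v w, v ≠ w → ¬ G.Adj v w → ∃ C : Set V, v ∉ C ∧ w ∉ C ∧ G.MSep v w C

/-- `G` is a bi-directed graph. -/
def Bidirected : Prop := ∀ v w, G.E v w = .none ∨ G.E v w = .bidir

/-- `G` is an undirected graph. -/
def UndirectedG : Prop := ∀ v w, G.E v w = .none ∨ G.E v w = .undir

/-- `G` is a directed acyclic graph. -/
def IsDAG : Prop :=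
  (∀ v w, G.E v w = .none ∨ G.E v w = .arrowTo ∨ G.E v w = .arrowFrom) ∧
  (∀ v w, G.Dir v w → ¬ G.Anc w v)

/-- `G` and `H` have the same skeleton. -/
def SameSkeleton (H : MixedGraph V) : Prop := ∀ v w, G.Adj v w ↔ H.Adj v w

/-- `G` and `H` are Markov equivalent: their m-separation relations
coincide. -/
def MarkovEquiv (H : MixedGraph V) : Prop :=
  ∀ v w (C : Set V), v ≠ w → v ∉ C → w ∉ C → (G.MSep v w C ↔ H.MSep v w C)

open Classical in
/-- The edge map obtained from `G` by dropping all arrowheads at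
simplicial vertices. -/
noncomputable def dropE (v w : V) : EType :=
  match G.E v w with
  | .none => .none
  | .undir => .undir
  | .arrowTo => if G.Simplicial w then .undir else .arrowTo
  | .arrowFrom => if G.Simplicial v then .undir else .arrowFrom
  | .bidir =>
      if G.Simplicial v then (if G.Simplicial w then .undir else .arrowTo)
      else (if G.Simplicial w then .arrowFrom else .bidir)

/-- The graph obtained from `G` by dropping all arrowheads at simplicial
vertices; for a bi-directed graph `G` this is the simplicial graph `Gˢ`. -/
noncomputable def drop : MixedGraph V where
  E := G.dropE
  no_loop v := by simp [dropE, G.no_loop]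
  symm v w := by
    unfold dropE
    rw [G.symm v w]
    cases h : G.E v w <;>
      simp only [EType.mirror] <;> split_ifs <;> simp_all [EType.mirror]

open Classical in
/-- The edge map of the minimally oriented graph `G^min_<`: starting from
the simplicial graph, each bi-directed edge `v ↔ w` with `Bd v ⊆ Bd w`
and `v < w` is replaced by `v → w`. -/
noncomputable def gminE [LinearOrder V] (v w : V) : EType :=
  match G.dropE v w with
  | .bidir =>
      if G.Bd v ⊆ G.Bd w ∧ v < w then .arrowTo
      else if G.Bd w ⊆ G.Bd v ∧ w < v then .arrowFrom
      else .bidir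
  | e => e

/-- The graph `G^min_<` produced by Algorithm 4.2 from `G` and the total
order on `V`. -/
noncomputable def gmin [LinearOrder V] : MixedGraph V where
  E := G.gminE
  no_loop v := by
    have h := G.drop.no_loop v
    simp only [drop] at h
    simp [gminE, h]
  symm v w := by
    have h := G.drop.symm v w
    simp only [drop] at h
    unfold gminE
    rw [h]
    cases hE : G.dropE v w <;> simp only [EType.mirror]
    case bidir =>
      by_cases c1 : G.Bd v ⊆ G.Bd w ∧ v < w
      · have c2 : ¬ (G.Bd w ⊆ G.Bd v ∧ w < v) := fun h' => lt_asymm c1.2 h'.2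
        simp [c1, c2, EType.mirror]
      · by_cases c2 : G.Bd w ⊆ G.Bd v ∧ w < v
        · simp [c1, c2, EType.mirror]
        · simp [c1, c2, EType.mirror]

/-- Total number of arrowheads of `G`: the number of directed edges plus
twice the number of bi-directed edges. -/
noncomputable def arr : ℕ :=
  {p : V × V | G.Dir p.1 p.2}.ncard + {p : V × V | G.Bidir p.1 p.2}.ncard

end MixedGraph

/-- `Gm` is a minimally oriented graph for `G`. -/
def MinOriented {V : Type} (G Gm : MixedGraph V) : Prop :=
  Gm.Ancestral ∧ Gm.Maximal ∧ G.MarkovEquiv Gm ∧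
  ∀ H : MixedGraph V, H.Ancestral → H.Maximal → G.MarkovEquiv H → Gm.arr ≤ H.arr

/-!
In a Markov equivalence class every maximal graph has the skeleton of `G`, because adjacent
vertices are m-connected given every set, and a bi-directed graph separates non-adjacent
vertices by `∅`.  If `v → w` in `Gm` and `u` is a neighbour of `v` but not of `w`, then a set
`C` separating `u` and `w` in `Gm` must avoid `v` (otherwise the collider path `u ↔ v ↔ w`
connects them in `G`), and then `u ∗ v → w` connects them in `Gm`.  Hence boundaries grow
along directed paths of `Gm`, and since `Gm` has no directed cycles the three clauses of the
relation fit together into a partial order.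
-/

theorem isPartialOrder_eq_or_lt_or_reflTransGen {V β : Type*} [PartialOrder β] {f : V → β}
    {R : V → V → Prop} (hmono : ∀ v w, R v w → f v ≤ f w)
    (hacyc : ∀ v w, R v w → ¬ Relation.ReflTransGen R w v) :
    IsPartialOrder V (fun v w => v = w ∨ f v < f w ∨ Relation.ReflTransGen R v w) := by
  have hle : ∀ {v w}, Relation.ReflTransGen R v w → f v ≤ f w := fun h => by
    induction h with
    | refl => exact le_rfl
    | tail _ hR ih => exact ih.trans (hmono _ _ hR)
  refine { refl := fun v => Or.inl rfl, trans := ?_, antisymm := ?_ }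
  · rintro a b c (rfl | hab | hab) (rfl | hbc | hbc)
    all_goals first
      | exact Or.inl rfl
      | exact Or.inr (Or.inl ‹_›)
      | exact Or.inr (Or.inr ‹_›)
      | skip
    · exact Or.inr (Or.inl (hab.trans hbc))
    · exact Or.inr (Or.inl (hab.trans_le (hle hbc)))
    · exact Or.inr (Or.inl ((hle hab).trans_lt hbc))
    · exact Or.inr (Or.inr (hab.trans hbc))
  · rintro a b (rfl | hab | hab) (hba | hba | hba)
    all_goals first | rfl | exact hba.symm | skip
    · exact absurd (hab.trans hba) (lt_irrefl _)
    · exact absurd (hab.trans_le (hle hba)) (lt_irrefl _)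
    · exact absurd (hba.trans_le (hle hab)) (lt_irrefl _)
    · rcases hab.cases_head with rfl | ⟨x, hax, hxb⟩
      · rfl
      · exact absurd (hxb.trans hba) (hacyc a x hax)

theorem EType.mirror_eq_none {e : EType} (h : e.mirror = .none) : e = .none := by
  cases e <;> simp_all [EType.mirror]

theorem ConsecTriple.not_pair {V : Type} {u w a b c : V} :
    ¬ ConsecTriple [u, w] a b c := by
  rintro ⟨l1, l2, hl⟩
  have := congrArg List.length hl
  simp only [List.length_append, List.length_cons, List.length_nil] at this
  omega

theorem ConsecTriple.eq_of_triple {V : Type} {u v w a b c : V}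
    (h : ConsecTriple [u, v, w] a b c) : a = u ∧ b = v ∧ c = w := by
  obtain ⟨l1, l2, hl⟩ := h
  have hlen := congrArg List.length hl
  simp only [List.length_append, List.length_cons, List.length_nil] at hlen
  obtain rfl : l1 = [] := List.eq_nil_of_length_eq_zero (by omega)
  simp only [List.nil_append, List.cons.injEq] at hl
  exact ⟨hl.1.symm, hl.2.1.symm, hl.2.2.1.symm⟩

namespace MixedGraph

variable {V : Type} {G H : MixedGraph V} {u v w : V}

theorem Adj.symm (h : G.Adj v w) : G.Adj w v := by
  unfold Adj at *
  rw [G.symm v w]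
  exact fun hc => h (EType.mirror_eq_none hc)

theorem Adj.ne (h : G.Adj v w) : v ≠ w := by
  rintro rfl
  exact h (G.no_loop v)

theorem Dir.adj (h : G.Dir v w) : G.Adj v w := by
  unfold Adj
  rw [h]
  exact EType.noConfusion

theorem Bidir.symm (h : G.Bidir v w) : G.Bidir w v := by
  unfold Bidir at *
  rw [G.symm v w, h]
  rfl

theorem Dir.not_headAt (h : G.Dir v w) : ¬ G.HeadAt w v := by
  have hwv : G.E w v = .arrowFrom := by rw [G.symm v w, h]; rfl
  unfold HeadAt
  rw [hwv]
  simp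

theorem Bidirected.bidir (hG : G.Bidirected) (h : G.Adj v w) : G.Bidir v w :=
  (hG v w).resolve_left h

theorem mconn_of_adj (h : G.Adj v w) (C : Set V) : G.MConn v w C := by
  refine ⟨[v, w], ⟨⟨by simp [h.ne], List.isChain_pair.mpr h⟩, ?_⟩, rfl, rfl⟩
  exact fun a b c hc => (ConsecTriple.not_pair hc).elim

theorem mconn_of_triple (huv : G.Adj u v) (hvw : G.Adj v w) (huw : u ≠ w) {C : Set V}
    (hcol : G.Collider u v w → v ∈ G.anSet C) (hncol : ¬ G.Collider u v w → v ∉ C) :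
    G.MConn u w C := by
  refine ⟨[u, v, w], ⟨⟨by simp [huv.ne, hvw.ne, huw], ?_⟩, ?_⟩, rfl, rfl⟩
  · exact List.isChain_cons_cons.mpr ⟨huv, List.isChain_pair.mpr hvw⟩
  · intro a b c hc
    obtain ⟨rfl, rfl, rfl⟩ := ConsecTriple.eq_of_triple hc
    exact ⟨hcol, hncol⟩

theorem Bidirected.msep_empty (hG : G.Bidirected) (hne : v ≠ w) (hna : ¬ G.Adj v w) :
    G.MSep v w ∅ := by
  rintro ⟨p, ⟨⟨-, hch⟩, htr⟩, hh, hl⟩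
  match p, hh, hl with
  | [a], hh, hl =>
      simp only [List.head?_cons, List.getLast?_singleton, Option.some.injEq] at hh hl
      exact hne (hh.symm.trans hl)
  | [a, b], hh, hl =>
      simp only [List.head?_cons, List.getLast?_cons_cons, List.getLast?_singleton,
        Option.some.injEq] at hh hl
      subst hh hl
      exact hna (List.isChain_pair.mp hch)
  | a :: b :: c :: rest, _, _ =>
      obtain ⟨hab, hch⟩ := List.isChain_cons_cons.mp hch
      have hbc := (List.isChain_cons_cons.mp hch).1
      have hcol : G.Collider a b c :=
        ⟨Or.inr (hG.bidir hab), Or.inr (hG.bidir hbc).symm⟩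
      obtain ⟨_, hmem, -⟩ := (htr a b c ⟨[], rest, rfl⟩).1 hcol
      exact hmem

theorem Bidirected.maximal (hG : G.Bidirected) : G.Maximal :=
  fun _ _ hne hna => ⟨∅, id, id, hG.msep_empty hne hna⟩

theorem MarkovEquiv.symm (h : G.MarkovEquiv H) : H.MarkovEquiv G :=
  fun v w C hne hv hw => (h v w C hne hv hw).symm

theorem MarkovEquiv.adj (hme : G.MarkovEquiv H) (hH : H.Maximal) (h : G.Adj v w) :
    H.Adj v w := by
  by_contra hna
  obtain ⟨C, hv, hw, hsep⟩ := hH v w h.ne hna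
  exact (hme v w C h.ne hv hw).mpr hsep (mconn_of_adj h C)

theorem MarkovEquiv.sameSkeleton (hme : G.MarkovEquiv H) (hG : G.Maximal) (hH : H.Maximal) :
    G.SameSkeleton H :=
  fun _ _ => ⟨hme.adj hH, hme.symm.adj hG⟩

theorem bd_subset_of_dir (hG : G.Bidirected) (hH : H.Maximal) (hme : G.MarkovEquiv H)
    (hd : H.Dir v w) : G.Bd v ⊆ G.Bd w := by
  have hskel := hme.sameSkeleton hG.maximal hH
  have hvw : G.Adj v w := (hskel v w).mpr hd.adj
  rintro u (rfl | hvu)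
  · exact Or.inr hvw.symm
  by_contra hu
  simp only [Bd, Set.mem_insert_iff, Set.mem_ofPred_eq, not_or] at hu
  obtain ⟨huw, hnadj⟩ := hu
  have huv : G.Adj u v := hvu.symm
  obtain ⟨C, huC, hwC, hsep⟩ :=
    hH u w huw fun h => hnadj ((hskel u w).mpr h).symm
  have hGsep : G.MSep u w C := (hme u w C huw huC hwC).mpr hsep
  have hvC : v ∉ C := fun hvC =>
    hGsep <| mconn_of_triple huv hvw huw (fun _ => ⟨v, hvC, .refl⟩)
      fun hncol => (hncol ⟨Or.inr (hG.bidir huv), Or.inr (hG.bidir hvw).symm⟩).elim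
  exact hsep <| mconn_of_triple ((hskel u v).mp huv) hd.adj huw
    (fun hcol => absurd hcol.2 hd.not_headAt) fun _ => hvC

end MixedGraph

theorem stmt15_general {V : Type} (G Gm : MixedGraph V) (hG : G.Bidirected)
    (hmin : MinOriented G Gm) :
    IsPartialOrder V
      (fun v w => v = w ∨ G.Bd v ⊂ G.Bd w ∨ Relation.ReflTransGen Gm.Dir v w) := by
  obtain ⟨hanc, hmax, hme, -⟩ := hmin
  exact isPartialOrder_eq_or_lt_or_reflTransGen
    (fun _ _ => MixedGraph.bd_subset_of_dir hG hmax hme) hanc.1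

/-- For a minimally oriented graph `Gm` of a bi-directed
graph `G`, the relation "`v = w`, or `Bd v ⊊ Bd w` in `G`, or there is a
directed path from `v` to `w` in `Gm`" is a partial order. -/
theorem stmt15 {V : Type} [Finite V] (G Gm : MixedGraph V) (hG : G.Bidirected)
    (hmin : MinOriented G Gm) :
    IsPartialOrder V
      (fun v w => v = w ∨ G.Bd v ⊂ G.Bd w ∨ Relation.ReflTransGen Gm.Dir v w) :=
  stmt15_general G Gm hG hmin
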